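/- arXiv:2002.10744 — 4 statements merged into one kernel-verified Lean document; each statement's English description precedes it below -/
import Mathlib

section
/- A crown on n ≥ 4 vertices (a cycle C_n with one semi-edge attached at each vertex) has a C4-quotient 2-factor if and only if n is even. -/
/-- The possible "ends" of an edge in a pregraph: an ordinary edge (or loop)
with two endpoints, or a semi-edge with a single endpoint. -/
inductive PEnds (V : Type) where
  | edge : V → V → PEnds V
  | semi : V → PEnds V
  deriving DecidableEq

/-- A finite pregraph: a multigraph that may contain loops, parallel edges and
semi-edges.  Edges are abstract and carry their endpoints via `ends`. -/
structure Pregraph where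
  V : Type
  E : Type
  [fintypeV : Fintype V]
  [decEqV : DecidableEq V]
  [fintypeE : Fintype E]
  [decEqE : DecidableEq E]
  ends : E → PEnds V

attribute [instance] Pregraph.fintypeV Pregraph.decEqV Pregraph.fintypeE Pregraph.decEqE

namespace Pregraph

/-- The number of end-points that edge `e` has at the vertex `v`
(a loop at `v` counts twice, a semi-edge once). -/
def endCount (P : Pregraph) (v : P.V) (e : P.E) : ℕ :=
  match P.ends e with
  | .edge a b => (if a = v then 1 else 0) + (if b = v then 1 else 0)
  | .semi a => if a = v then 1 else 0

/-- The degree of a vertex: loops count 2, semi-edges count 1. -/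
def degree (P : Pregraph) (v : P.V) : ℕ := ∑ e : P.E, P.endCount v e

open Classical in
/-- The degree of a vertex inside a set `F` of edges. -/
noncomputable def degIn (P : Pregraph) (F : Set P.E) (v : P.V) : ℕ :=
  ∑ e : P.E, if e ∈ F then P.endCount v e else 0

/-- `e` is a proper edge with endpoints `a` and `b`. -/
def joins (P : Pregraph) (e : P.E) (a b : P.V) : Prop :=
  P.ends e = .edge a b ∨ P.ends e = .edge b a

/-- The edge `e` is incident to the vertex `v`. -/
def incident (P : Pregraph) (e : P.E) (v : P.V) : Prop :=
  match P.ends e with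
  | .edge a b => a = v ∨ b = v
  | .semi a => a = v

/-- Adjacency via a proper edge. -/
def Adj (P : Pregraph) (u w : P.V) : Prop := ∃ e, P.joins e u w

/-- Connectedness of a pregraph. -/
def Connected (P : Pregraph) : Prop := ∀ u w : P.V, Relation.ReflTransGen P.Adj u w

/-- A cubic pregraph: connected and every vertex has degree 3. -/
def Cubic (P : Pregraph) : Prop := P.Connected ∧ ∀ v, P.degree v = 3

/-- The edge `e` has at least one endpoint in the vertex set `C`. -/
def touches (P : Pregraph) (e : P.E) (C : Set P.V) : Prop :=
  match P.ends e with
  | .edge a b => a ∈ C ∨ b ∈ C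
  | .semi a => a ∈ C

/-- `C` is a component of the edge set `F` of type `q₁` : a 4-cycle. -/
def IsQ1Comp (P : Pregraph) (F : Set P.E) (C : Set P.V) : Prop :=
  ∃ a b c d : P.V, a ≠ b ∧ a ≠ c ∧ a ≠ d ∧ b ≠ c ∧ b ≠ d ∧ c ≠ d ∧
    C = {a, b, c, d} ∧
    ∃ e1 e2 e3 e4 : P.E, e1 ≠ e2 ∧ e1 ≠ e3 ∧ e1 ≠ e4 ∧ e2 ≠ e3 ∧ e2 ≠ e4 ∧ e3 ≠ e4 ∧
      {e ∈ F | P.touches e C} = {e1, e2, e3, e4} ∧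
      P.joins e1 a b ∧ P.joins e2 b c ∧ P.joins e3 c d ∧ P.joins e4 d a

/-- `C` is a component of the edge set `F` of type `q₂` : a digon. -/
def IsQ2Comp (P : Pregraph) (F : Set P.E) (C : Set P.V) : Prop :=
  ∃ a b : P.V, a ≠ b ∧ C = {a, b} ∧
    ∃ e1 e2 : P.E, e1 ≠ e2 ∧ {e ∈ F | P.touches e C} = {e1, e2} ∧
      P.joins e1 a b ∧ P.joins e2 a b

/-- `C` is a component of the edge set `F` of type `q₃` : an edge together with
a semi-edge at each endpoint. -/
def IsQ3Comp (P : Pregraph) (F : Set P.E) (C : Set P.V) : Prop :=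
  ∃ a b : P.V, a ≠ b ∧ C = {a, b} ∧
    ∃ e1 e2 e3 : P.E, e1 ≠ e2 ∧ e1 ≠ e3 ∧ e2 ≠ e3 ∧
      {e ∈ F | P.touches e C} = {e1, e2, e3} ∧
      P.joins e1 a b ∧ P.ends e2 = .semi a ∧ P.ends e3 = .semi b

/-- `C` is a component of the edge set `F` of type `q₄` : a single vertex with
two semi-edges. -/
def IsQ4Comp (P : Pregraph) (F : Set P.E) (C : Set P.V) : Prop :=
  ∃ a : P.V, C = {a} ∧
    ∃ e1 e2 : P.E, e1 ≠ e2 ∧ {e ∈ F | P.touches e C} = {e1, e2} ∧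
      P.ends e1 = .semi a ∧ P.ends e2 = .semi a

/-- `C` is a component of `F` which is a quotient of `C₄`. -/
def IsCQComp (P : Pregraph) (F : Set P.E) (C : Set P.V) : Prop :=
  P.IsQ1Comp F C ∨ P.IsQ2Comp F C ∨ P.IsQ3Comp F C ∨ P.IsQ4Comp F C

/-- `F` is a `C₄`-quotient 2-factor with component partition `Ps`. -/
def IsCQFactorWith (P : Pregraph) (F : Set P.E) (Ps : Set (Set P.V)) : Prop :=
  (∀ C ∈ Ps, P.IsCQComp F C) ∧
  (∀ v : P.V, ∃ C ∈ Ps, v ∈ C) ∧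
  (∀ C ∈ Ps, ∀ D ∈ Ps, C ≠ D → Disjoint C D)

/-- `F` is a `C₄`-quotient 2-factor: a spanning subgraph in which every vertex has
degree 2 and every component is a quotient of `C₄`. -/
def IsCQFactor (P : Pregraph) (F : Set P.E) : Prop := ∃ Ps, P.IsCQFactorWith F Ps

/-- The pregraph has a `C₄`-quotient 2-factor. -/
def HasCQFactor (P : Pregraph) : Prop := ∃ F, P.IsCQFactor F

/-- Compatibility of ends under a vertex map (edges are unordered). -/
def endsRel {V W : Type} (σ : V → W) : PEnds V → PEnds W → Prop
  | .edge a b, x => x = .edge (σ a) (σ b) ∨ x = .edge (σ b) (σ a)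
  | .semi a, x => x = .semi (σ a)

/-- An isomorphism of pregraphs. -/
structure Iso (P Q : Pregraph) where
  vmap : P.V ≃ Q.V
  emap : P.E ≃ Q.E
  compat : ∀ e, endsRel vmap (P.ends e) (Q.ends (emap e))

/-- Two edge sets (e.g. two 2-factors) of `P` are isomorphic if some automorphism
of `P` maps one onto the other. -/
def FactorIso (P : Pregraph) (F1 F2 : Set P.E) : Prop :=
  ∃ φ : Iso P P, ∀ e, e ∈ F1 ↔ φ.emap e ∈ F2

/-- Adjacency in the ladder graph `K₂ × Pₙ` on `Fin n × Fin 2`. -/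
def ladderAdj (n : ℕ) (p q : Fin n × Fin 2) : Prop :=
  (p.1 = q.1 ∧ p.2 ≠ q.2) ∨ (p.2 = q.2 ∧ ((p.1 : ℕ) + 1 = q.1 ∨ (q.1 : ℕ) + 1 = p.1))

/-- The subgraph of `P` with vertex set `S` and edge set `F` is isomorphic to the
ladder `K₂ × Pₙ` for some `n ≥ 2`. -/
def IsLadder (P : Pregraph) (S : Set P.V) (F : Set P.E) : Prop :=
  ∃ n : ℕ, 2 ≤ n ∧ ∃ f : Fin n × Fin 2 → P.V, Function.Injective f ∧
    S = Set.range f ∧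
    (∀ e ∈ F, ∃ p q, ladderAdj n p q ∧ P.joins e (f p) (f q)) ∧
    (∀ p q, ladderAdj n p q → ∃! e, e ∈ F ∧ P.joins e (f p) (f q))

/-- A ladder of `P`: a maximal subgraph isomorphic to `K₂ × Pₙ`, `n ≥ 2`. -/
def IsMaxLadder (P : Pregraph) (S : Set P.V) (F : Set P.E) : Prop :=
  P.IsLadder S F ∧
  ∀ S' F', P.IsLadder S' F' → S ⊆ S' → F ⊆ F' → S = S' ∧ F = F'

/-- A digon: two distinct vertices joined by two parallel edges. -/
def IsDigonPair (P : Pregraph) (a b : P.V) : Prop :=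
  a ≠ b ∧ ∃ e1 e2 : P.E, e1 ≠ e2 ∧ P.joins e1 a b ∧ P.joins e2 a b

end Pregraph

/-- The crown on `n` vertices: the cycle `Cₙ` with one semi-edge attached at each
vertex.  `Sum.inl i` is the cycle edge from `i` to `i + 1`, `Sum.inr i` is the
semi-edge at `i`. -/
def crown (n : ℕ) [NeZero n] : Pregraph where
  V := Fin n
  E := Fin n ⊕ Fin n
  ends := fun e =>
    match e with
    | .inl i => .edge i (i + 1)
    | .inr i => .semi i

/-!
A crown has exactly one semi-edge at each vertex, so no component of a `C₄`-quotient
2-factor can be of type `q₄`; every other quotient of `C₄` has an even number of vertices,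
and the components partition the vertex set, so `n` is even. Conversely, for even `n` the
blocks `{2k, 2k + 1}`, each with its cycle edge and its two semi-edges, are components of
type `q₃` that partition the crown.
-/

theorem Set.even_natCard_of_partition {α : Type*} [Finite α] {Ps : Set (Set α)}
    (hcover : ∀ a, ∃ C ∈ Ps, a ∈ C) (hdisj : Ps.PairwiseDisjoint id)
    (heven : ∀ C ∈ Ps, Even C.ncard) : Even (Nat.card α) := by
  have hunion : (⋃ C ∈ Ps, C) = Set.univ :=
    Set.eq_univ_of_forall fun a => let ⟨_, hC, ha⟩ := hcover a; Set.mem_biUnion hC ha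
  have hsum := Ps.toFinite.ncard_biUnion (fun C _ => C.toFinite) hdisj
  rw [hunion, Set.ncard_univ] at hsum
  rw [hsum]
  exact finsum_mem_induction _ Even.zero (fun _ _ => Even.add) heven

namespace Pregraph

variable {P : Pregraph} {F : Set P.E} {C : Set P.V}

theorem IsCQComp.even_ncard
    (hsemi : ∀ a e₁ e₂, P.ends e₁ = .semi a → P.ends e₂ = .semi a → e₁ = e₂) (h : P.IsCQComp F C) : Even C.ncard := by
  rcases h with ⟨a, b, c, d, hab, hac, had, hbc, hbd, hcd, rfl, -⟩ | ⟨a, b, hab, rfl, -⟩ |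
    ⟨a, b, hab, rfl, -⟩ | ⟨a, -, e₁, e₂, hne, -, h₁, h₂⟩
  · rw [Set.ncard_insert_of_notMem (by simp [hab, hac, had]),
      Set.ncard_insert_of_notMem (by simp [hbc, hbd]), Set.ncard_pair hcd]
    exact ⟨2, rfl⟩
  · rw [Set.ncard_pair hab]; exact even_two
  · rw [Set.ncard_pair hab]; exact even_two
  · exact absurd (hsemi a e₁ e₂ h₁ h₂) hne

theorem IsCQFactor.even_natCard
    (hsemi : ∀ a e₁ e₂, P.ends e₁ = .semi a → P.ends e₂ = .semi a → e₁ = e₂) (h : P.IsCQFactor F) : Even (Nat.card P.V) := by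
  obtain ⟨Ps, hcomp, hcover, hdisj⟩ := h
  exact Set.even_natCard_of_partition hcover hdisj fun C hC => (hcomp C hC).even_ncard hsemi

end Pregraph

namespace Fin

variable {n : ℕ} [NeZero n]

theorem val_add_one_of_even (hn : Even n) {i : Fin n} (hi : Even (i : ℕ)) :
    ((i + 1 : Fin n) : ℕ) = i + 1 :=
  val_add_one_of_lt' (by rcases hn with ⟨m, rfl⟩; rcases hi with ⟨k, hk⟩; omega)

theorem mem_pair_add_one_iff (hn : Even n) {i : Fin n} (hi : Even (i : ℕ)) {x : Fin n} :
    x ∈ ({i, i + 1} : Set (Fin n)) ↔ (x : ℕ) / 2 = (i : ℕ) / 2 := by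
  rw [Set.mem_insert_iff, Set.mem_singleton_iff, Fin.ext_iff, Fin.ext_iff,
    val_add_one_of_even hn hi]
  rcases hi with ⟨k, hk⟩
  omega

end Fin

namespace crown

variable {n : ℕ} [NeZero n]

theorem eq_of_ends_eq_semi {a : Fin n} {e : (crown n).E} (h : (crown n).ends e = .semi a) :
    e = .inr a := by
  rcases e with i | i
  · cases h
  · cases h; rfl

theorem even_of_hasCQFactor (h : (crown n).HasCQFactor) : Even n := by
  obtain ⟨F, hF⟩ := h
  simpa [crown] using hF.even_natCard fun a e₁ e₂ h₁ h₂ =>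
    (eq_of_ends_eq_semi h₁).trans (eq_of_ends_eq_semi h₂).symm

def evenPairing : Set (crown n).E :=
  {e | Sum.elim (fun i : Fin n => Even (i : ℕ)) (fun _ => True) e}

def evenBlocks : Set (Set (Fin n)) :=
  {C | ∃ i : Fin n, Even (i : ℕ) ∧ C = {i, i + 1}}

theorem isQ3Comp_evenPairing (hn : Even n) {i : Fin n} (hi : Even (i : ℕ)) :
    (crown n).IsQ3Comp evenPairing ({i, i + 1} : Set (Fin n)) := by
  have hne : i ≠ i + 1 := fun h => by
    simpa [Fin.val_add_one_of_even hn hi] using congrArg Fin.val h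
  refine ⟨i, i + 1, hne, rfl, .inl i, .inr i, .inr (i + 1), Sum.inl_ne_inr, Sum.inl_ne_inr,
    fun h => hne (Sum.inr_injective h), ?_, Or.inl rfl, rfl, rfl⟩
  ext (j | j)
  · change Even (j : ℕ) ∧ (j ∈ ({i, i + 1} : Set (Fin n)) ∨ j + 1 ∈ ({i, i + 1} : Set (Fin n))) ↔
      (.inl j : Fin n ⊕ Fin n) ∈ ({.inl i, .inr i, .inr (i + 1)} : Set (Fin n ⊕ Fin n))
    simp only [Fin.mem_pair_add_one_iff hn hi, Set.mem_insert_iff, Set.mem_singleton_iff,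
      Sum.inl.injEq, reduceCtorEq, or_false, Fin.ext_iff]
    constructor
    · rintro ⟨hj, h⟩
      rw [Fin.val_add_one_of_even hn hj] at h
      obtain ⟨a, ha⟩ := hi
      obtain ⟨b, hb⟩ := hj
      omega
    · intro h
      exact ⟨h ▸ hi, Or.inl (congrArg (· / 2) h)⟩
  · change True ∧ j ∈ ({i, i + 1} : Set (Fin n)) ↔
      (.inr j : Fin n ⊕ Fin n) ∈ ({.inl i, .inr i, .inr (i + 1)} : Set (Fin n ⊕ Fin n))
    simp only [true_and, Set.mem_insert_iff, Set.mem_singleton_iff, Sum.inr.injEq, reduceCtorEq,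
      false_or]

theorem isCQFactorWith_evenPairing (hn : Even n) :
    (crown n).IsCQFactorWith evenPairing evenBlocks := by
  refine ⟨?_, fun (v : Fin n) => ?_, ?_⟩
  · rintro _ ⟨i, hi, rfl⟩
    exact .inr <| .inr <| .inl <| isQ3Comp_evenPairing hn hi
  · have hlt : 2 * ((v : ℕ) / 2) < n := by have := v.isLt; omega
    have heven : Even (2 * ((v : ℕ) / 2)) := even_two_mul _
    exact ⟨_, ⟨⟨_, hlt⟩, heven, rfl⟩, (Fin.mem_pair_add_one_iff hn (i := ⟨_, hlt⟩) heven).mpr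
      (by dsimp only; omega)⟩
  · rintro _ ⟨i, hi, rfl⟩ _ ⟨j, hj, rfl⟩ hne
    refine Set.disjoint_left.mpr fun x hxi hxj => hne ?_
    rw [Fin.mem_pair_add_one_iff hn hi] at hxi
    rw [Fin.mem_pair_add_one_iff hn hj] at hxj
    obtain ⟨a, ha⟩ := hi
    obtain ⟨b, hb⟩ := hj
    rw [Fin.ext (by omega : (i : ℕ) = j)]

theorem hasCQFactor_of_even (hn : Even n) : (crown n).HasCQFactor :=
  ⟨evenPairing, evenBlocks, isCQFactorWith_evenPairing hn⟩

end crown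

theorem crown_hasCQFactor_iff_general (n : ℕ) [NeZero n] :
    (crown n).HasCQFactor ↔ Even n :=
  ⟨crown.even_of_hasCQFactor, crown.hasCQFactor_of_even⟩

/-- A crown on `n ≥ 4` vertices has a `C₄`-quotient 2-factor if and
only if `n` is even. -/
theorem crown_hasCQFactor_iff (n : ℕ) [NeZero n] (hn : 4 ≤ n) :
    (crown n).HasCQFactor ↔ Even n :=
  crown_hasCQFactor_iff_general n
end

section
/- A Möbius ladder on n ≥ 4 vertices has a C4-quotient 2-factor if and only if n is divisible by 4. -/
/-- The Möbius ladder on `2 * m` vertices: vertex `i` is adjacent to `i ± 1` and to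
`i + m` (indices mod `2 * m`).  `Sum.inl i` is the cycle edge from `i` to `i + 1`,
`Sum.inr i` (for `i < m`) is the chord from `i` to `i + m`. -/
def mobiusLadder (m : ℕ) : Pregraph where
  V := Fin (2 * m)
  E := Fin (2 * m) ⊕ Fin m
  ends := fun e =>
    match e with
    | .inl i => .edge i ⟨(i.1 + 1) % (2 * m), Nat.mod_lt _ (by have := i.2; omega)⟩
    | .inr i => .edge ⟨i.1, by have := i.2; omega⟩ ⟨i.1 + m, by have := i.2; omega⟩

/-!
The Möbius ladder on `2 * m ≥ 4` vertices has neither semi-edges nor parallel edges, so every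
component of a `C₄`-quotient 2-factor is a genuine 4-cycle; the components then partition the
`2 * m` vertices into blocks of four. Conversely, when `m` is even, the cycle edges leaving even
vertices together with all chords form the disjoint squares `i, i + 1, i + 1 + m, i + m` for even
`i < m`, which cover every vertex.
-/

theorem Nat.add_one_mod_cases {j n : ℕ} (h : j < n) :
    (j + 1) % n = j + 1 ∨ j + 1 = n ∧ (j + 1) % n = 0 := by
  rcases (show j + 1 ≤ n from h).lt_or_eq with h' | h'
  · exact .inl (Nat.mod_eq_of_lt h')
  · exact .inr ⟨h', by rw [h', Nat.mod_self]⟩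

theorem Setoid.IsPartition.dvd_card_of_ncard_eq {α : Type*} [Finite α] {P : Set (Set α)}
    (hP : Setoid.IsPartition P) {k : ℕ} (hk : ∀ t ∈ P, t.ncard = k) : k ∣ Nat.card α := by
  have := Fintype.ofFinite P
  rw [← Set.ncard_univ, hP.ncard_eq_finsum, finsum_eq_sum_of_fintype]
  simp only [Set.univ_inter]
  rw [Finset.sum_congr rfl fun t _ => hk t.1 t.2, Finset.sum_const, smul_eq_mul]
  exact Dvd.intro_left _ rfl

namespace Pregraph

variable {P : Pregraph} {F : Set P.E} {C : Set P.V}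

theorem IsCQComp.nonempty (h : P.IsCQComp F C) : C.Nonempty := by
  rcases h with ⟨a, -, -, -, -, -, -, -, -, -, rfl, -⟩ | ⟨a, -, -, rfl, -⟩ | ⟨a, -, -, rfl, -⟩ |
    ⟨a, rfl, -⟩ <;> exact ⟨a, by simp⟩

theorem IsCQFactorWith.isPartition {Ps : Set (Set P.V)} (h : P.IsCQFactorWith F Ps) :
    Setoid.IsPartition Ps :=
  Set.PairwiseDisjoint.isPartition_of_exists_of_ne_empty h.2.2 h.2.1 fun h0 => (h.1 _ h0).nonempty.ne_empty rfl

theorem IsQ1Comp.ncard_eq_four (h : P.IsQ1Comp F C) : C.ncard = 4 := by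
  obtain ⟨a, b, c, d, hab, hac, had, hbc, hbd, hcd, rfl, -⟩ := h
  rw [Set.ncard_insert_of_notMem (by simp [hab, hac, had]),
    Set.ncard_insert_of_notMem (by simp [hbc, hbd]), Set.ncard_pair hcd]

theorem IsCQComp.isQ1Comp (hsemi : ∀ e a, P.ends e ≠ .semi a)
    (hpar : ∀ {e₁ e₂ a b}, P.joins e₁ a b → P.joins e₂ a b → e₁ = e₂) (h : P.IsCQComp F C) :
    P.IsQ1Comp F C := by
  rcases h with h | ⟨a, b, -, -, e₁, e₂, hne, -, h₁, h₂⟩ |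
    ⟨a, -, -, -, -, e, -, -, -, -, -, -, he, -⟩ | ⟨a, -, e, -, -, -, he, -⟩
  · exact h
  · exact absurd (hpar h₁ h₂) hne
  all_goals exact absurd he (hsemi e a)

theorem four_dvd_card_of_isCQFactor (hsemi : ∀ e a, P.ends e ≠ .semi a)
    (hpar : ∀ {e₁ e₂ a b}, P.joins e₁ a b → P.joins e₂ a b → e₁ = e₂) (hF : P.IsCQFactor F) :
    4 ∣ Fintype.card P.V := by
  obtain ⟨Ps, hPs⟩ := hF
  rw [← Nat.card_eq_fintype_card]
  exact hPs.isPartition.dvd_card_of_ncard_eq fun C hC =>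
    ((hPs.1 C hC).isQ1Comp hsemi hpar).ncard_eq_four

end Pregraph

namespace MobiusLadder

variable {m : ℕ}

theorem ends_ne_semi (e : (mobiusLadder m).E) (a : Fin (2 * m)) :
    (mobiusLadder m).ends e ≠ .semi a := by
  cases e <;> simp [mobiusLadder]

theorem eq_of_joins (hm : 2 ≤ m) {e₁ e₂ : (mobiusLadder m).E} {a b : Fin (2 * m)}
    (h₁ : (mobiusLadder m).joins e₁ a b) (h₂ : (mobiusLadder m).joins e₂ a b) : e₁ = e₂ := by
  rcases e₁ with i | i <;> rcases e₂ with j | j <;>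
    simp only [Pregraph.joins, mobiusLadder, PEnds.edge.injEq, Fin.ext_iff, Sum.inl.injEq,
      Sum.inr.injEq, reduceCtorEq] at h₁ h₂ ⊢ <;>
    rcases Nat.add_one_mod_cases i.2 with hi | hi <;>
    rcases Nat.add_one_mod_cases j.2 with hj | hj <;> omega

theorem joins_inl {a b : Fin (2 * m)} (h : b.val = a.val + 1) :
    (mobiusLadder m).joins (.inl a) a b :=
  .inl (by simp [mobiusLadder, Fin.ext_iff, h, Nat.mod_eq_of_lt (h ▸ b.2)])

theorem joins_inr {j : Fin m} {a b : Fin (2 * m)} (ha : a.val = j.val) (hb : b.val = j.val + m) :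
    (mobiusLadder m).joins (.inr j) a b :=
  .inl (by simp [mobiusLadder, Fin.ext_iff, ha, hb])

theorem touches_inl (j : Fin (2 * m)) (C : Set (Fin (2 * m))) :
    (mobiusLadder m).touches (.inl j) C ↔
      j ∈ C ∨ ⟨(j + 1) % (2 * m), Nat.mod_lt _ (by have := j.2; omega)⟩ ∈ C :=
  Iff.rfl

theorem touches_inr (j : Fin m) (C : Set (Fin (2 * m))) :
    (mobiusLadder m).touches (.inr j) C ↔ ⟨j, by omega⟩ ∈ C ∨ ⟨j + m, by omega⟩ ∈ C :=
  Iff.rfl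

def squareFactor (m : ℕ) : Set (Fin (2 * m) ⊕ Fin m) :=
  {e | Sum.elim (fun j : Fin (2 * m) => j.val % 2 = 0) (fun _ => True) e}

theorem inl_mem_squareFactor {j : Fin (2 * m)} : .inl j ∈ squareFactor m ↔ j.val % 2 = 0 :=
  Iff.rfl

theorem inr_mem_squareFactor {j : Fin m} : .inr j ∈ squareFactor m :=
  trivial

def square (m i : ℕ) : Set (Fin (2 * m)) :=
  {v | v.val = i ∨ v.val = i + 1 ∨ v.val = i + 1 + m ∨ v.val = i + m}

theorem mem_square {i : ℕ} {v : Fin (2 * m)} :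
    v ∈ square m i ↔ v.val = i ∨ v.val = i + 1 ∨ v.val = i + 1 + m ∨ v.val = i + m :=
  Iff.rfl

theorem isQ1Comp_square (hm : m % 2 = 0) {i : ℕ} (hi : i % 2 = 0) (him : i + 1 < m) :
    (mobiusLadder m).IsQ1Comp (squareFactor m) (square m i) := by
  refine ⟨⟨i, by omega⟩, ⟨i + 1, by omega⟩, ⟨i + 1 + m, by omega⟩, ⟨i + m, by omega⟩,
    Fin.mk_eq_mk.not.2 (by omega), Fin.mk_eq_mk.not.2 (by omega), Fin.mk_eq_mk.not.2 (by omega),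
    Fin.mk_eq_mk.not.2 (by omega), Fin.mk_eq_mk.not.2 (by omega), Fin.mk_eq_mk.not.2 (by omega),
    ?vertices, .inl ⟨i, by omega⟩, .inr ⟨i + 1, him⟩, .inl ⟨i + m, by omega⟩, .inr ⟨i, by omega⟩,
    Sum.inl_ne_inr, Sum.inl_injective.ne (Fin.mk_eq_mk.not.2 (by omega)), Sum.inl_ne_inr,
    Sum.inr_ne_inl, Sum.inr_injective.ne (Fin.mk_eq_mk.not.2 (by omega)), Sum.inl_ne_inr,
    ?edges, joins_inl rfl, joins_inr rfl rfl, (joins_inl (Nat.add_right_comm i 1 m)).symm,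
    (joins_inr rfl rfl).symm⟩
  -- `(mobiusLadder m).V` is `Fin (2 * m)` only after unfolding `mobiusLadder`; restating the
  -- set equalities at the `Fin` types lets `simp` read the set literals.
  case vertices =>
    show square m i = ({_, _, _, _} : Set (Fin (2 * m)))
    ext v
    simp only [mem_square, Set.mem_insert_iff, Set.mem_singleton_iff, Fin.ext_iff]
  case edges =>
    show {e : Fin (2 * m) ⊕ Fin m | e ∈ squareFactor m ∧ (mobiusLadder m).touches e (square m i)} =
      ({_, _, _, _} : Set (Fin (2 * m) ⊕ Fin m))
    ext (j | j)
    · simp only [Set.mem_ofPred_eq, inl_mem_squareFactor, touches_inl, mem_square,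
        Set.mem_insert_iff, Set.mem_singleton_iff, Fin.ext_iff, Sum.inl.injEq, reduceCtorEq,
        or_false, false_or]
      rcases Nat.add_one_mod_cases j.2 with h | ⟨_, h⟩ <;> rw [h] <;> omega
    · simp only [Set.mem_ofPred_eq, inr_mem_squareFactor, touches_inr, mem_square,
        Set.mem_insert_iff, Set.mem_singleton_iff, Fin.ext_iff, Sum.inr.injEq, reduceCtorEq,
        false_or, true_and]
      omega

def squares (m : ℕ) : Set (Set (Fin (2 * m))) :=
  {C | ∃ i, i % 2 = 0 ∧ i + 1 < m ∧ C = square m i}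

theorem isCQFactorWith_squares (hm : m % 2 = 0) :
    (mobiusLadder m).IsCQFactorWith (squareFactor m) (squares m) := by
  refine ⟨?_, fun (v : Fin (2 * m)) => ?_, ?_⟩
  · rintro C ⟨i, hi, him, rfl⟩
    exact .inl (isQ1Comp_square hm hi him)
  · by_cases hvm : v.val < m
    · exact ⟨_, ⟨v - v % 2, by omega, by omega, rfl⟩, mem_square.2 (by omega)⟩
    · exact ⟨_, ⟨v - m - (v - m) % 2, by omega, by omega, rfl⟩, mem_square.2 (by omega)⟩
  · rintro C ⟨i, hi, him, rfl⟩ D ⟨j, hj, hjm, rfl⟩ hne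
    refine Set.disjoint_left.2 fun v hvi hvj => hne (congrArg (square m) ?_)
    rw [mem_square] at hvi hvj
    omega

end MobiusLadder

/-- A Möbius ladder on `n = 2 * m ≥ 4` vertices has a `C₄`-quotient
2-factor if and only if `n` is divisible by 4. -/
theorem mobiusLadder_hasCQFactor_iff (m : ℕ) (hm : 2 ≤ m) :
    (mobiusLadder m).HasCQFactor ↔ 4 ∣ 2 * m := by
  constructor
  · rintro ⟨F, hF⟩
    have h4 := Pregraph.four_dvd_card_of_isCQFactor MobiusLadder.ends_ne_semi
      (MobiusLadder.eq_of_joins hm) hF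
    rwa [show Fintype.card (mobiusLadder m).V = 2 * m from Fintype.card_fin _] at h4
  · intro h
    exact ⟨_, _, MobiusLadder.isCQFactorWith_squares (by omega)⟩
end

section
/- A prism on n ≥ 6 vertices (the Cartesian product of K2 with a cycle C_{n/2}) has a C4-quotient 2-factor if and only if n is divisible by 4. -/
/-- The prism over `Cₘ`: the Cartesian product of `K₂` and the cycle `Cₘ`, on
`2 * m` vertices.  `Sum.inl (i, j)` is the rail edge from `(i, j)` to `(i+1, j)`,
`Sum.inr i` is the rung edge from `(i, 0)` to `(i, 1)`. -/
def prism (m : ℕ) : Pregraph where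
  V := Fin m × Fin 2
  E := (Fin m × Fin 2) ⊕ Fin m
  ends := fun e =>
    match e with
    | .inl p => .edge p (⟨(p.1.1 + 1) % m, Nat.mod_lt _ (by have := p.1.2; omega)⟩, p.2)
    | .inr i => .edge (i, 0) (i, 1)

/-! A prism over `Cₘ` with `m ≥ 3` has neither semi-edges nor parallel edges, so every component
of a `C₄`-quotient 2-factor is a genuine 4-cycle, and the components split the `2m` vertices into
blocks of four. Conversely, for even `m` the rungs together with the rails leaving the even columns
form a 2-factor whose components are the squares on the columns `2k, 2k + 1`. -/

theorem Set.dvd_card_of_cover_of_ncard_eq {α : Type*} [Finite α] {Ps : Set (Set α)} {k : ℕ}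
    (hcover : ∀ v, ∃ C ∈ Ps, v ∈ C) (hdisj : Ps.PairwiseDisjoint id)
    (hk : ∀ C ∈ Ps, C.ncard = k) : k ∣ Nat.card α := by
  have hunion : (⋃ C ∈ Ps, C) = Set.univ :=
    Set.eq_univ_of_forall fun v => by simpa using hcover v
  rw [← Set.ncard_univ, ← hunion,
    (Set.toFinite Ps).ncard_biUnion (s := fun C => C) (fun C _ => Set.toFinite C) hdisj]
  exact finsum_mem_induction (k ∣ ·) (dvd_zero k) (fun _ _ => dvd_add)
    fun C hC => (hk C hC).symm ▸ dvd_rfl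

namespace Pregraph

variable {P : Pregraph} {F : Set P.E} {C : Set P.V}

def HasNoSemiEdges (P : Pregraph) : Prop := ∀ e a, P.ends e ≠ .semi a

def HasNoParallelEdges (P : Pregraph) : Prop :=
  ∀ e₁ e₂ a b, a ≠ b → P.joins e₁ a b → P.joins e₂ a b → e₁ = e₂

theorem joins_iff_of_ends_eq {e : P.E} {a b x y : P.V} (h : P.ends e = .edge a b) :
    P.joins e x y ↔ (a = x ∧ b = y) ∨ (a = y ∧ b = x) := by
  simp [joins, h]

theorem touches_iff_of_ends_eq {e : P.E} {a b : P.V} (h : P.ends e = .edge a b) :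
    P.touches e C ↔ a ∈ C ∨ b ∈ C := by
  simp [touches, h]

theorem IsCQComp.isQ1Comp_s5 (hsemi : P.HasNoSemiEdges) (hpar : P.HasNoParallelEdges)
    (h : P.IsCQComp F C) : P.IsQ1Comp F C := by
  rcases h with h | ⟨a, b, hab, -, e₁, e₂, hne, -, h₁, h₂⟩
    | ⟨a, -, -, -, -, e, -, -, -, -, -, -, he, -⟩ | ⟨a, -, e, -, -, -, he, -⟩
  · exact h
  · exact absurd (hpar e₁ e₂ a b hab h₁ h₂) hne
  · exact absurd he (hsemi e a)
  · exact absurd he (hsemi e a)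

theorem HasCQFactor.four_dvd_card (hsemi : P.HasNoSemiEdges) (hpar : P.HasNoParallelEdges)
    (h : P.HasCQFactor) : 4 ∣ Fintype.card P.V := by
  obtain ⟨F, Ps, hcomp, hcover, hdisj⟩ := h
  rw [← Nat.card_eq_fintype_card]
  exact Set.dvd_card_of_cover_of_ncard_eq hcover hdisj
    fun C hC => ((hcomp C hC).isQ1Comp_s5 hsemi hpar).ncard_eq_four

end Pregraph

namespace Prism

variable {m : ℕ}

def cycSucc (i : Fin m) : Fin m := ⟨(i + 1) % m, Nat.mod_lt _ (by have := i.2; omega)⟩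

theorem val_cycSucc (i : Fin m) :
    ((cycSucc i : ℕ) = i + 1 ∧ (i : ℕ) + 1 < m) ∨ ((cycSucc i : ℕ) = 0 ∧ (i : ℕ) + 1 = m) := by
  rcases Nat.lt_or_ge (i + 1) m with h | h
  · exact Or.inl ⟨Nat.mod_eq_of_lt h, h⟩
  · have hm : (i : ℕ) + 1 = m := by omega
    exact Or.inr ⟨by simp [cycSucc, hm], hm⟩

theorem ends_inl (i : Fin m) (j : Fin 2) :
    (prism m).ends (.inl (i, j)) = .edge (i, j) (cycSucc i, j) := rfl

theorem ends_inr (i : Fin m) : (prism m).ends (.inr i) = .edge (i, 0) (i, 1) := rfl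

theorem joins_inl {i : Fin m} {j : Fin 2} {x y : Fin m × Fin 2} :
    (prism m).joins (.inl (i, j)) x y ↔
      ((i, j) = x ∧ (cycSucc i, j) = y) ∨ ((i, j) = y ∧ (cycSucc i, j) = x) :=
  Pregraph.joins_iff_of_ends_eq (ends_inl i j)

theorem joins_inr {i : Fin m} {x y : Fin m × Fin 2} :
    (prism m).joins (.inr i) x y ↔ ((i, 0) = x ∧ (i, 1) = y) ∨ ((i, 0) = y ∧ (i, 1) = x) :=
  Pregraph.joins_iff_of_ends_eq (ends_inr i)

theorem touches_inl {i : Fin m} {j : Fin 2} {C : Set (Fin m × Fin 2)} :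
    (prism m).touches (.inl (i, j)) C ↔ (i, j) ∈ C ∨ (cycSucc i, j) ∈ C :=
  Pregraph.touches_iff_of_ends_eq (ends_inl i j)

theorem touches_inr {i : Fin m} {C : Set (Fin m × Fin 2)} :
    (prism m).touches (.inr i) C ↔ (i, 0) ∈ C ∨ (i, 1) ∈ C :=
  Pregraph.touches_iff_of_ends_eq (ends_inr i)

theorem hasNoSemiEdges : (prism m).HasNoSemiEdges := by
  rintro (_ | _) a <;> simp [prism]

theorem eq_of_joins (hm : 3 ≤ m) {e₁ e₂ : (Fin m × Fin 2) ⊕ Fin m} {a b : Fin m × Fin 2}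
    (h₁ : (prism m).joins e₁ a b) (h₂ : (prism m).joins e₂ a b) : e₁ = e₂ := by
  obtain ⟨a₁, a₂⟩ := a
  obtain ⟨b₁, b₂⟩ := b
  rcases e₁ with ⟨i, j⟩ | i <;> rcases e₂ with ⟨i', j'⟩ | i' <;>
  simp only [joins_inl, joins_inr, Prod.ext_iff, Fin.ext_iff, Sum.inl.injEq, Sum.inr.injEq,
    reduceCtorEq] at h₁ h₂ ⊢ <;>
  have := val_cycSucc i <;> have := val_cycSucc i' <;> omega

theorem hasNoParallelEdges (hm : 3 ≤ m) : (prism m).HasNoParallelEdges :=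
  fun _ _ _ _ _ => eq_of_joins hm

theorem card_V : Fintype.card (prism m).V = 2 * m := by
  change Fintype.card (Fin m × Fin 2) = 2 * m
  simp [mul_comm]

theorem val_cycSucc_of_even (hm : Even m) {i : Fin m} (hi : Even (i : ℕ)) :
    (cycSucc i : ℕ) = i + 1 := by
  rw [Nat.even_iff] at hm hi
  have := val_cycSucc i
  omega

def square (i : Fin m) : Set (Fin m × Fin 2) := {(i, 0), (cycSucc i, 0), (cycSucc i, 1), (i, 1)}

/-- All rungs, and the rails leaving the columns of even index. -/
def squareFactor (m : ℕ) : Set ((Fin m × Fin 2) ⊕ Fin m) :=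
  {e | Sum.elim (fun p : Fin m × Fin 2 => Even (p.1 : ℕ)) (fun _ => True) e}

theorem mem_square {i : Fin m} {x : Fin m × Fin 2} :
    x ∈ square i ↔ (x.1 = i ∨ x.1 = cycSucc i) := by
  obtain ⟨x₁, x₂⟩ := x
  fin_cases x₂ <;> simp [square, or_comm]

theorem squareFactor_touches_square (hm : Even m) {i : Fin m} (hi : Even (i : ℕ)) :
    {e ∈ squareFactor m | (prism m).touches e (square i)} =
      {.inl (i, 0), .inr (cycSucc i), .inl (i, 1), .inr i} := by
  rw [Nat.even_iff] at hm hi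
  have := val_cycSucc i
  ext (⟨i', j⟩ | i')
  · have := val_cycSucc i'
    simp only [squareFactor, touches_inl, mem_square, Set.mem_ofPred_eq, Sum.elim_inl,
      Nat.even_iff, Set.mem_insert_iff, Set.mem_singleton_iff, Sum.inl.injEq, reduceCtorEq,
      Prod.ext_iff, Fin.ext_iff, Fin.val_zero, Fin.val_one, false_or, or_false]
    omega
  · have := val_cycSucc i'
    simp only [squareFactor, touches_inr, mem_square, Set.mem_ofPred_eq, Sum.elim_inr,
      Set.mem_insert_iff, Set.mem_singleton_iff, Sum.inr.injEq, reduceCtorEq, Fin.ext_iff,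
      true_and, false_or]
    omega

theorem isQ1Comp_square (hm : Even m) {i : Fin m} (hi : Even (i : ℕ)) :
    (prism m).IsQ1Comp (squareFactor m) (square i) := by
  have hs := val_cycSucc_of_even hm hi
  have hne (x y : Fin m × Fin 2) (h : (x.1 : ℕ) ≠ y.1 ∨ (x.2 : ℕ) ≠ y.2) : x ≠ y := by
    rintro rfl
    simp at h
  refine ⟨(i, 0), (cycSucc i, 0), (cycSucc i, 1), (i, 1), ?_, ?_, ?_, ?_, ?_, ?_, rfl,
    .inl (i, 0), .inr (cycSucc i), .inl (i, 1), .inr i, Sum.inl_ne_inr,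
    Sum.inl_injective.ne (hne _ _ (by simp)), Sum.inl_ne_inr, Sum.inr_ne_inl,
    Sum.inr_injective.ne (Fin.ne_of_val_ne (by omega)), Sum.inl_ne_inr,
    squareFactor_touches_square hm hi, joins_inl.mpr (.inl ⟨rfl, rfl⟩),
    joins_inr.mpr (.inl ⟨rfl, rfl⟩), joins_inl.mpr (.inr ⟨rfl, rfl⟩),
    joins_inr.mpr (.inr ⟨rfl, rfl⟩)⟩
  all_goals exact hne _ _ (by simp [hs])

theorem hasCQFactor_of_even (hm : Even m) : (prism m).HasCQFactor := by
  refine ⟨squareFactor m, {C | ∃ i : Fin m, Even (i : ℕ) ∧ C = square i}, ?_, ?_, ?_⟩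
  · rintro _ ⟨i, hi, rfl⟩
    exact .inl (isQ1Comp_square hm hi)
  · rintro ⟨i, j⟩
    have hlt : (i : ℕ) / 2 * 2 < m := by omega
    have hs := val_cycSucc_of_even hm (i := ⟨_, hlt⟩) (by simp)
    refine ⟨square ⟨_, hlt⟩, ⟨_, by simp, rfl⟩, mem_square.mpr ?_⟩
    simp only [Fin.ext_iff] at hs ⊢
    omega
  · rintro _ ⟨i, hi, rfl⟩ _ ⟨i', hi', rfl⟩ hne
    refine Set.disjoint_left.mpr fun x hx hx' => hne (congrArg square (Fin.ext ?_))
    have hs := val_cycSucc_of_even hm hi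
    have hs' := val_cycSucc_of_even hm hi'
    rw [mem_square] at hx hx'
    rw [Nat.even_iff] at hi hi'
    simp only [Fin.ext_iff] at hx hx'
    omega

end Prism

/-- A prism on `n = 2 * m ≥ 6` vertices (the Cartesian product of
`K₂` with `C_{n/2}`) has a `C₄`-quotient 2-factor if and only if `n` is divisible
by 4. -/
theorem prism_hasCQFactor_iff (m : ℕ) (hm : 3 ≤ m) :
    (prism m).HasCQFactor ↔ 4 ∣ 2 * m := by
  refine ⟨fun h => ?_, fun h => Prism.hasCQFactor_of_even (Nat.even_iff.mpr (by omega))⟩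
  simpa [Prism.card_V] using h.four_dvd_card Prism.hasNoSemiEdges (Prism.hasNoParallelEdges hm)
end

section
/- Let d_1 ≥ d_2 ≥ … ≥ d_k be nonnegative integers with even sum. Then there exists a loopless multigraph on k vertices with degree sequence (d_1,…,d_k) if and only if d_1 ≤ d_2 + d_3 + … + d_k. -/
lemma owens_trent_realize : ∀ S : ℕ, ∀ n : ℕ, ∀ d : Fin n → ℕ,
    ∑ i, d i = S → Even S → (∀ i, 2 * d i ≤ S) →
    ∃ m : Fin n → Fin n → ℕ,
      (∀ i j, m i j = m j i) ∧ (∀ i, m i i = 0) ∧ (∀ i, ∑ j, m i j = d i) := by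
  intro S
  induction S using Nat.strong_induction_on with
  | _ S ih =>
    intro n d hsum heven hcond
    rcases Nat.eq_zero_or_pos S with hS | hS
    · subst hS
      have hz : ∀ i, d i = 0 := fun i =>
        (Finset.sum_eq_zero_iff.mp hsum) i (Finset.mem_univ i)
      exact ⟨fun _ _ => 0, fun _ _ => rfl, fun _ => rfl, fun i => by simp [hz]⟩
    · obtain ⟨i0, -, hi0⟩ :=
        Finset.exists_ne_zero_of_sum_ne_zero (s := Finset.univ) (by omega : ∑ i, d i ≠ 0)
      obtain ⟨i, -, hi⟩ := Finset.exists_max_image Finset.univ d ⟨i0, Finset.mem_univ _⟩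
      have hdi : ∀ l, d l ≤ d i := fun l => hi l (Finset.mem_univ l)
      have hdi1 : 1 ≤ d i := le_trans (Nat.one_le_iff_ne_zero.mpr hi0) (hdi i0)
      have h2i := hcond i
      have hrest : d i + ∑ l ∈ Finset.univ.erase i, d l = S := by
        rw [Finset.add_sum_erase _ d (Finset.mem_univ i), hsum]
      obtain ⟨j, hjmem, hj0⟩ :=
        Finset.exists_ne_zero_of_sum_ne_zero
          (by omega : ∑ l ∈ Finset.univ.erase i, d l ≠ 0)
      have hij : j ≠ i := Finset.ne_of_mem_erase hjmem
      have hdj1 : 1 ≤ d j := Nat.one_le_iff_ne_zero.mpr hj0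
      set d' : Fin n → ℕ := fun l => if l = i ∨ l = j then d l - 1 else d l with hd'
      have key : ∀ l, d' l + (if l = i ∨ l = j then 1 else 0) = d l := by
        intro l
        by_cases h : l = i ∨ l = j
        · simp only [hd', if_pos h]
          rcases h with h | h <;> subst h <;> omega
        · simp [hd', h]
      have hindsum : ∑ l, (if l = i ∨ l = j then (1:ℕ) else 0) = 2 := by
        have hind : ∀ l, (if l = i ∨ l = j then (1:ℕ) else 0) =
            (if l = i then 1 else 0) + (if l = j then 1 else 0) := by
          intro l
          rcases eq_or_ne l i with h1 | h1 <;> rcases eq_or_ne l j with h2 | h2 <;>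
            simp [h1, h2, hij, Ne.symm hij]
        simp [hind, Finset.sum_add_distrib]
      have hsum' : ∑ l, d' l + 2 = S := by
        calc ∑ l, d' l + 2
            = ∑ l, d' l + ∑ l, (if l = i ∨ l = j then (1:ℕ) else 0) := by rw [hindsum]
          _ = ∑ l, (d' l + (if l = i ∨ l = j then (1:ℕ) else 0)) := by
              rw [Finset.sum_add_distrib]
          _ = ∑ l, d l := Finset.sum_congr rfl (fun l _ => key l)
          _ = S := hsum
      have hS2 : 2 ≤ S := by
        obtain ⟨t, ht⟩ := heven; omega
      have heven' : Even (S - 2) := by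
        obtain ⟨t, ht⟩ := heven; exact ⟨t - 1, by omega⟩
      have hcond' : ∀ l, 2 * d' l ≤ S - 2 := by
        intro l
        rcases eq_or_ne l i with h1 | h1
        · subst h1; simp only [hd', if_pos (Or.inl rfl)]; omega
        rcases eq_or_ne l j with h2 | h2
        · subst h2
          have := hdi l
          simp only [hd', if_pos (Or.inr rfl)]; omega
        · simp only [hd', if_neg (by tauto : ¬(l = i ∨ l = j))]
          have hl2 := hcond l
          by_cases hle : 2 * d l = S
          · exfalso
            have hli : l ∈ Finset.univ.erase i := Finset.mem_erase.mpr ⟨h1, Finset.mem_univ _⟩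
            have hlj : l ∈ (Finset.univ.erase i).erase j := Finset.mem_erase.mpr ⟨h2, hli⟩
            have h1' : d j + ∑ x ∈ (Finset.univ.erase i).erase j, d x
                = ∑ x ∈ Finset.univ.erase i, d x := Finset.add_sum_erase _ d hjmem
            have h2' : d l ≤ ∑ x ∈ (Finset.univ.erase i).erase j, d x :=
              Finset.single_le_sum (fun x _ => Nat.zero_le _) hlj
            have := hdi l
            omega
          · obtain ⟨t, ht⟩ := heven; omega
      obtain ⟨m', hsym', hdiag', hrow'⟩ :=
        ih (S - 2) (by omega) n d' (by omega) heven' hcond'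
      refine ⟨fun a b => m' a b + (if (a = i ∧ b = j) ∨ (a = j ∧ b = i) then 1 else 0),
        ?_, ?_, ?_⟩
      · intro a b
        simp only []
        rw [hsym' a b]
        congr 1
        by_cases h : (a = i ∧ b = j) ∨ (a = j ∧ b = i)
        · rw [if_pos h, if_pos (by tauto)]
        · rw [if_neg h, if_neg (by tauto)]
      · intro a
        simp only []
        rw [hdiag' a]
        have : ¬((a = i ∧ a = j) ∨ (a = j ∧ a = i)) := by
          rintro (⟨ha1, ha2⟩ | ⟨ha1, ha2⟩) <;> exact hij (by rw [← ha1, ← ha2])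
        rw [if_neg this]
      · intro a
        simp only []
        rw [Finset.sum_add_distrib, hrow' a]
        rcases eq_or_ne a i with h1 | h1
        · have hc : ∀ b : Fin n, ((a = i ∧ b = j) ∨ (a = j ∧ b = i)) ↔ b = j := by
            intro b
            constructor
            · rintro (⟨-, h⟩ | ⟨h, -⟩)
              · exact h
              · exact absurd (h1.symm.trans h) (Ne.symm hij)
            · intro h; exact Or.inl ⟨h1, h⟩
          simp only [hc, Finset.sum_ite_eq' Finset.univ j (fun _ => (1:ℕ)),
            Finset.mem_univ, if_true]
          have hk := key a
          rw [if_pos (Or.inl h1)] at hk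
          exact hk
        · rcases eq_or_ne a j with h2 | h2
          · have hc : ∀ b : Fin n, ((a = i ∧ b = j) ∨ (a = j ∧ b = i)) ↔ b = i := by
              intro b
              constructor
              · rintro (⟨h, -⟩ | ⟨-, h⟩)
                · exact absurd h h1
                · exact h
              · intro h; exact Or.inr ⟨h2, h⟩
            simp only [hc, Finset.sum_ite_eq' Finset.univ i (fun _ => (1:ℕ)),
              Finset.mem_univ, if_true]
            have hk := key a
            rw [if_pos (Or.inr h2)] at hk
            exact hk
          · have hc : ∀ b : Fin n, ¬((a = i ∧ b = j) ∨ (a = j ∧ b = i)) := by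
              rintro b (⟨h, -⟩ | ⟨h, -⟩)
              · exact h1 h
              · exact h2 h
            simp only [hc, if_false, Finset.sum_const_zero, add_zero]
            have hk := key a
            rw [if_neg (by tauto), add_zero] at hk
            exact hk

/-- **Owens–Trent.** Nonnegative integers `d 0 ≥ d 1 ≥ … ≥ d k` with
even sum are the degree sequence of a loopless multigraph (given by a symmetric
multiplicity matrix with zero diagonal) if and only if
`d 0 ≤ d 1 + d 2 + … + d k`. -/
theorem owens_trent (k : ℕ) (d : Fin (k + 1) → ℕ)
    (hanti : Antitone d) (heven : Even (∑ i, d i)) :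
    (∃ m : Fin (k + 1) → Fin (k + 1) → ℕ,
        (∀ i j, m i j = m j i) ∧ (∀ i, m i i = 0) ∧ (∀ i, ∑ j, m i j = d i))
      ↔ d 0 ≤ ∑ i ∈ Finset.univ.erase 0, d i := by
  constructor
  · rintro ⟨m, hsym, hdiag, hrow⟩
    have h1 : d 0 = ∑ j ∈ Finset.univ.erase 0, m 0 j := by
      rw [← hrow 0, ← Finset.add_sum_erase _ _ (Finset.mem_univ (0 : Fin (k+1))),
        hdiag 0, zero_add]
    rw [h1]
    refine Finset.sum_le_sum fun j _ => ?_
    rw [hsym 0 j, ← hrow j]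
    exact Finset.single_le_sum (fun x _ => Nat.zero_le _) (Finset.mem_univ 0)
  · intro hle
    have hrest : d 0 + ∑ l ∈ Finset.univ.erase 0, d l = ∑ i, d i :=
      Finset.add_sum_erase _ d (Finset.mem_univ 0)
    refine owens_trent_realize (∑ i, d i) (k + 1) d rfl heven fun i => ?_
    rcases eq_or_ne i 0 with h | h
    · subst h; omega
    · have h1 : d i ≤ d 0 := hanti (Fin.zero_le i)
      have h2 : d i ≤ ∑ l ∈ Finset.univ.erase 0, d l :=
        Finset.single_le_sum (fun x _ => Nat.zero_le _)
          (Finset.mem_erase.mpr ⟨h, Finset.mem_univ _⟩)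
      omega
end
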